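/- Let n ∈ ℕ, let G be a finite group, and let ρ : G → (EuclideanSpace ℝ (Fin n) ≃ₗᵢ[ℝ] EuclideanSpace ℝ (Fin n)) be a group homomorphism into the group of linear isometries. Call a polynomial p ∈ MvPolynomial (Fin n) ℝ anti-invariant if for every g ∈ G the polynomial obtained by the linear change of variables ρ(g) equals det(ρ(g)) · p. Suppose p is a nonzero anti-invariant polynomial such that every nonzero anti-invariant polynomial has total degree ≥ the total degree of p. Then Δp = 0, where Δ is the polynomial Laplacian Δp = ∑_i ∂ᵢ(∂ᵢ p). -/

import Mathlib

/-!
An orthogonal linear change of variables commutes with the Laplacian (chain rule together with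
`A * Aᵀ = 1`), so the Laplacian of an anti-invariant polynomial is again anti-invariant. Since the
Laplacian lowers the total degree by two and kills constants, a nonzero `Δ p` would be an
anti-invariant polynomial of smaller degree than `p`.
-/

open MvPolynomial

namespace MvPolynomial

variable {σ R : Type*} [CommSemiring R]

theorem totalDegree_pderiv_le (i : σ) (q : MvPolynomial σ R) :
    (pderiv i q).totalDegree ≤ q.totalDegree - 1 := by
  refine Finset.sup_le fun m hm => ?_
  have hcoeff : coeff (m + Finsupp.single i 1) q ≠ 0 := by
    intro h
    rw [mem_support_iff, coeff_pderiv, h, zero_mul] at hm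
    exact hm rfl
  have := le_totalDegree (mem_support_iff.mpr hcoeff)
  rw [Finsupp.sum_add_index' (fun _ => rfl) (fun _ _ _ => rfl),
    Finsupp.sum_single_index rfl] at this
  omega

variable [Fintype σ]

noncomputable def laplacian : MvPolynomial σ R →ₗ[R] MvPolynomial σ R :=
  ∑ i, (pderiv i).toLinearMap ∘ₗ (pderiv i).toLinearMap

theorem laplacian_apply (q : MvPolynomial σ R) :
    laplacian q = ∑ i, pderiv i (pderiv i q) := by
  simp [laplacian]

theorem totalDegree_laplacian_le (q : MvPolynomial σ R) :
    (laplacian q).totalDegree ≤ q.totalDegree - 2 := by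
  rw [laplacian_apply]
  refine (totalDegree_finsetSum _ _).trans (Finset.sup_le fun i _ => ?_)
  have h₁ := totalDegree_pderiv_le i (pderiv i q)
  have h₂ := totalDegree_pderiv_le i q
  omega

theorem laplacian_eq_zero_of_totalDegree_eq_zero {q : MvPolynomial σ R}
    (hq : q.totalDegree = 0) : laplacian q = 0 := by
  rw [totalDegree_eq_zero_iff_eq_C.mp hq, laplacian_apply]
  simp

noncomputable def linearSubst (A : Matrix σ σ R) : MvPolynomial σ R →ₐ[R] MvPolynomial σ R :=
  aeval fun i => ∑ j, C (A i j) * X j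

theorem pderiv_linearSubst_X (A : Matrix σ σ R) (i k : σ) :
    pderiv k (linearSubst A (X i)) = C (A i k) := by
  classical
  simp [linearSubst, pderiv_X, Pi.single_apply]

theorem pderiv_linearSubst (A : Matrix σ σ R) (k : σ) (q : MvPolynomial σ R) :
    pderiv k (linearSubst A q) = ∑ i, C (A i k) * linearSubst A (pderiv i q) := by
  classical
  induction q using MvPolynomial.induction_on with
  | C a => simp [linearSubst]
  | add p q hp hq => simp only [map_add, hp, hq, mul_add, Finset.sum_add_distrib]
  | mul_X p j hp =>
    simp only [map_mul, pderiv_mul, hp, pderiv_linearSubst_X, pderiv_X, Pi.single_apply,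
      Finset.sum_mul, map_add, mul_add, Finset.sum_add_distrib, apply_ite (linearSubst A), map_zero,
      mul_ite, mul_one, mul_zero, Finset.sum_ite_eq, Finset.mem_univ, if_true]
    simp only [mul_assoc, mul_comm (linearSubst A p)]

theorem laplacian_linearSubst [DecidableEq σ] {A : Matrix σ σ R} (hA : A * A.transpose = 1)
    (q : MvPolynomial σ R) : laplacian (linearSubst A q) = linearSubst A (laplacian q) := by
  have hrows (i l : σ) :
      ∑ k, C (A i k) * C (A l k) = (if i = l then 1 else 0 : MvPolynomial σ R) := by
    have h := congrFun (congrFun hA i) l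
    simp only [Matrix.mul_apply, Matrix.transpose_apply, Matrix.one_apply] at h
    simp only [← map_mul, ← map_sum, h, apply_ite C, map_one, map_zero]
  calc laplacian (linearSubst A q)
      = ∑ k, ∑ i, ∑ l, C (A i k) * C (A l k) * linearSubst A (pderiv l (pderiv i q)) := by
        simp only [laplacian_apply, pderiv_linearSubst, map_sum, pderiv_C_mul, Finset.mul_sum,
          mul_assoc]
    _ = ∑ i, ∑ l, (∑ k, C (A i k) * C (A l k)) * linearSubst A (pderiv l (pderiv i q)) := by
        simp only [Finset.sum_mul]
        rw [Finset.sum_comm]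
        exact Finset.sum_congr rfl fun _ _ => Finset.sum_comm
    _ = linearSubst A (laplacian q) := by
        simp [hrows, laplacian_apply]

theorem laplacian_eq_zero_of_forall_totalDegree_le {ι : Type*}
    (T : ι → MvPolynomial σ R →ₗ[R] MvPolynomial σ R) (χ : ι → R)
    (hT : ∀ g q, laplacian (T g q) = T g (laplacian q))
    {p : MvPolynomial σ R} (hp : ∀ g, T g p = χ g • p)
    (hmin : ∀ q, q ≠ 0 → (∀ g, T g q = χ g • q) → p.totalDegree ≤ q.totalDegree) :
    laplacian p = 0 := by
  by_contra hΔ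
  have hΔp (g : ι) : T g (laplacian p) = χ g • laplacian p := by
    rw [← hT, hp, map_smul]
  have hle := hmin _ hΔ hΔp
  have hlt := totalDegree_laplacian_le p
  exact hΔ (laplacian_eq_zero_of_totalDegree_eq_zero (by omega))

end MvPolynomial

theorem laplacian_of_minimal_antiinvariant_general
    (n : ℕ) (G : Type*) [Group G]
    (ρ : G →* (EuclideanSpace ℝ (Fin n) ≃ₗᵢ[ℝ] EuclideanSpace ℝ (Fin n)))
    (AntiInvariant : MvPolynomial (Fin n) ℝ → Prop)
    (hAntiInvariant : ∀ q : MvPolynomial (Fin n) ℝ, AntiInvariant q ↔ ∀ g : G,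
      aeval (fun i : Fin n => ∑ j : Fin n,
          C ((ρ g) (EuclideanSpace.single j (1 : ℝ)) i) * X j) q
        = C (LinearMap.det ((ρ g).toLinearEquiv.toLinearMap)) * q)
    (p : MvPolynomial (Fin n) ℝ) (hpA : AntiInvariant p)
    (hmin : ∀ q : MvPolynomial (Fin n) ℝ, q ≠ 0 → AntiInvariant q →
      p.totalDegree ≤ q.totalDegree) :
    ∑ i : Fin n, pderiv i (pderiv i p) = 0 := by
  let b := (EuclideanSpace.basisFun (Fin n) ℝ).toBasis
  let A (g : G) := LinearMap.toMatrix b b (ρ g).toLinearEquiv.toLinearMap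
  let det (g : G) := LinearMap.det (ρ g).toLinearEquiv.toLinearMap
  have hA (g : G) : A g * (A g).transpose = 1 := ((ρ g).toMatrix_mem_unitaryGroup _ _).2
  have hAntiInvariant' (q : MvPolynomial (Fin n) ℝ) :
      AntiInvariant q ↔ ∀ g, linearSubst (A g) q = det g • q := by
    simp [hAntiInvariant, linearSubst, A, b, det, LinearMap.toMatrix_apply, C_mul']
  rw [← laplacian_apply]
  exact laplacian_eq_zero_of_forall_totalDegree_le (fun g => (linearSubst (A g)).toLinearMap) det
    (fun g => laplacian_linearSubst (hA g)) ((hAntiInvariant' p).1 hpA)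
    fun q hq hqA => hmin q hq ((hAntiInvariant' q).2 hqA)

/-- If `p` is a nonzero polynomial which is anti-invariant under a finite group of linear
isometries of `ℝⁿ` (i.e. the change of variables by `ρ g` multiplies `p` by `det (ρ g)`),
of minimal total degree among nonzero anti-invariant polynomials, then `Δ p = 0`. -/
theorem laplacian_of_minimal_antiinvariant
    (n : ℕ) (G : Type*) [Group G] [Finite G]
    (ρ : G →* (EuclideanSpace ℝ (Fin n) ≃ₗᵢ[ℝ] EuclideanSpace ℝ (Fin n)))
    (AntiInvariant : MvPolynomial (Fin n) ℝ → Prop)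
    (hAntiInvariant : ∀ q : MvPolynomial (Fin n) ℝ, AntiInvariant q ↔ ∀ g : G,
      aeval (fun i : Fin n => ∑ j : Fin n,
          C ((ρ g) (EuclideanSpace.single j (1 : ℝ)) i) * X j) q
        = C (LinearMap.det ((ρ g).toLinearEquiv.toLinearMap)) * q)
    (p : MvPolynomial (Fin n) ℝ) (hp0 : p ≠ 0) (hpA : AntiInvariant p)
    (hmin : ∀ q : MvPolynomial (Fin n) ℝ, q ≠ 0 → AntiInvariant q →
      p.totalDegree ≤ q.totalDegree) :
    ∑ i : Fin n, pderiv i (pderiv i p) = 0 :=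
  laplacian_of_minimal_antiinvariant_general n G ρ AntiInvariant hAntiInvariant p hpA hmin
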